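/- Let (γ,f₁,f₂) be a pseudo-spherical spacelike framed immersion whose curvature has the form (α,ℓ̂,0,n̂), with ε̂ = ⟨f₁,f₁⟩ = -1, and assume n̂²(s) > α²(s) and g(s) < 0 for all s ∈ I. Set ζ(s) = (n̂(s)γ(s) - α(s)f₂(s))/√(n̂²(s)-α²(s)) (so ⟨ζ,ζ⟩ = -1), and define the focal surface F₁ : I × ℝ → AdS³ by F₁(s,θ) = cos θ·ζ(s) + sin θ·f₁(s). Then (s₀,θ₀) is a singular point of F₁, i.e., F₁ × (∂F₁/∂s) × (∂F₁/∂θ) vanishes at (s₀,θ₀), if and only if cos θ₀·(α(s₀)n̂'(s₀) - n̂(s₀)α'(s₀)) + sin θ₀·ℓ̂(s₀)n̂(s₀)√(n̂²(s₀)-α²(s₀)) = 0; and at every singular point (s₀,θ₀) one has F₁(s₀,θ₀) = ±E_a(γ)(s₀), so the set of singular values of F₁ coincides with the image of the AdS-evolute of γ. -/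

import Mathlib

noncomputable section

/-- The index-2 pseudo-scalar product on `ℝ⁴₂`. -/
def pdot (u w : Fin 4 → ℝ) : ℝ :=
  -(u 0 * w 0) - u 1 * w 1 + u 2 * w 2 + u 3 * w 3

/-- 3×3 determinant. -/
def det3 (a b c d e f g h i : ℝ) : ℝ :=
  a * (e * i - f * h) - b * (d * i - f * g) + c * (d * h - e * g)

/-- The triple product `u×v×w` in `ℝ⁴₂`. -/
def tripleProd (u v w : Fin 4 → ℝ) : Fin 4 → ℝ :=
  ![ -det3 (u 1) (u 2) (u 3) (v 1) (v 2) (v 3) (w 1) (w 2) (w 3),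
      det3 (u 0) (u 2) (u 3) (v 0) (v 2) (v 3) (w 0) (w 2) (w 3),
      det3 (u 0) (u 1) (u 3) (v 0) (v 1) (v 3) (w 0) (w 1) (w 3),
     -det3 (u 0) (u 1) (u 2) (v 0) (v 1) (v 2) (w 0) (w 1) (w 2)]

/-- `μ(s) = γ(s)×v₁(s)×v₂(s)`. -/
def muOf (γ v₁ v₂ : ℝ → Fin 4 → ℝ) (s : ℝ) : Fin 4 → ℝ :=
  tripleProd (γ s) (v₁ s) (v₂ s)

/-- Pseudo-spherical spacelike framed curve on the open interval `I`. -/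
structure SpacelikeFramed (I : Set ℝ) (γ v₁ v₂ : ℝ → Fin 4 → ℝ) (ε : ℝ) : Prop where
  smooth_γ : ContDiffOn ℝ (⊤ : ℕ∞) γ I
  smooth_v₁ : ContDiffOn ℝ (⊤ : ℕ∞) v₁ I
  smooth_v₂ : ContDiffOn ℝ (⊤ : ℕ∞) v₂ I
  eps : ε = 1 ∨ ε = -1
  ads : ∀ s ∈ I, pdot (γ s) (γ s) = -1
  normv₁ : ∀ s ∈ I, pdot (v₁ s) (v₁ s) = ε
  normv₂ : ∀ s ∈ I, pdot (v₂ s) (v₂ s) = -ε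
  orth₁ : ∀ s ∈ I, pdot (γ s) (v₁ s) = 0
  orth₂ : ∀ s ∈ I, pdot (γ s) (v₂ s) = 0
  orth₃ : ∀ s ∈ I, pdot (v₁ s) (v₂ s) = 0
  tangent₁ : ∀ s ∈ I, pdot (deriv γ s) (v₁ s) = 0
  tangent₂ : ∀ s ∈ I, pdot (deriv γ s) (v₂ s) = 0

def scurvA (γ v₁ v₂ : ℝ → Fin 4 → ℝ) (s : ℝ) : ℝ := pdot (deriv γ s) (muOf γ v₁ v₂ s)
def scurvL (ε : ℝ) (v₁ v₂ : ℝ → Fin 4 → ℝ) (s : ℝ) : ℝ := -ε * pdot (deriv v₁ s) (v₂ s)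
def scurvM (γ v₁ v₂ : ℝ → Fin 4 → ℝ) (s : ℝ) : ℝ := pdot (deriv v₁ s) (muOf γ v₁ v₂ s)
def scurvN (γ v₁ v₂ : ℝ → Fin 4 → ℝ) (s : ℝ) : ℝ := pdot (deriv v₂ s) (muOf γ v₁ v₂ s)

/-- Pseudo-spherical timelike framed curve on the open interval `I`. -/
structure TimelikeFramed (I : Set ℝ) (γ v₁ v₂ : ℝ → Fin 4 → ℝ) : Prop where
  smooth_γ : ContDiffOn ℝ (⊤ : ℕ∞) γ I
  smooth_v₁ : ContDiffOn ℝ (⊤ : ℕ∞) v₁ I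
  smooth_v₂ : ContDiffOn ℝ (⊤ : ℕ∞) v₂ I
  ads : ∀ s ∈ I, pdot (γ s) (γ s) = -1
  normv₁ : ∀ s ∈ I, pdot (v₁ s) (v₁ s) = 1
  normv₂ : ∀ s ∈ I, pdot (v₂ s) (v₂ s) = 1
  orth₁ : ∀ s ∈ I, pdot (γ s) (v₁ s) = 0
  orth₂ : ∀ s ∈ I, pdot (γ s) (v₂ s) = 0
  orth₃ : ∀ s ∈ I, pdot (v₁ s) (v₂ s) = 0
  tangent₁ : ∀ s ∈ I, pdot (deriv γ s) (v₁ s) = 0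
  tangent₂ : ∀ s ∈ I, pdot (deriv γ s) (v₂ s) = 0

def tcurvA (γ v₁ v₂ : ℝ → Fin 4 → ℝ) (s : ℝ) : ℝ := -pdot (deriv γ s) (muOf γ v₁ v₂ s)
def tcurvL (v₁ v₂ : ℝ → Fin 4 → ℝ) (s : ℝ) : ℝ := pdot (deriv v₁ s) (v₂ s)
def tcurvM (γ v₁ v₂ : ℝ → Fin 4 → ℝ) (s : ℝ) : ℝ := -pdot (deriv v₁ s) (muOf γ v₁ v₂ s)
def tcurvN (γ v₁ v₂ : ℝ → Fin 4 → ℝ) (s : ℝ) : ℝ := -pdot (deriv v₂ s) (muOf γ v₁ v₂ s)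

/-- `g(s)` for the spacelike total evolute. -/
def sG (α ℓh nh : ℝ → ℝ) (εh : ℝ) (s : ℝ) : ℝ :=
  εh * (α s * deriv nh s - nh s * deriv α s) ^ 2
    - (ℓh s) ^ 2 * (nh s) ^ 2 * ((nh s) ^ 2 + εh * (α s) ^ 2)

/-- Total evolute (with the `+` sign) of a spacelike framed immersion with curvature
`(α, ℓ̂, 0, n̂)`. -/
def sEvolute (γ f₁ f₂ : ℝ → Fin 4 → ℝ) (α ℓh nh : ℝ → ℝ) (εh : ℝ) (s : ℝ) : Fin 4 → ℝ :=
  (Real.sqrt |sG α ℓh nh εh s|)⁻¹ •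
    ((ℓh s * nh s) • (nh s • γ s - α s • f₂ s)
      - (α s * deriv nh s - nh s * deriv α s) • f₁ s)

/-- `f(s)` for the timelike total evolute. -/
def tF (α ℓh nh : ℝ → ℝ) (s : ℝ) : ℝ :=
  (α s * deriv nh s - nh s * deriv α s) ^ 2
    - (ℓh s) ^ 2 * (nh s) ^ 2 * ((nh s) ^ 2 - (α s) ^ 2)

/-- Total evolute (with the `+` sign) of a timelike framed immersion with curvature
`(α, ℓ̂, 0, n̂)`. -/
def tEvolute (γ f₁ f₂ : ℝ → Fin 4 → ℝ) (α ℓh nh : ℝ → ℝ) (s : ℝ) : Fin 4 → ℝ :=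
  (Real.sqrt |tF α ℓh nh s|)⁻¹ •
    ((ℓh s * nh s) • (nh s • γ s - α s • f₂ s)
      - (α s * deriv nh s - nh s * deriv α s) • f₁ s)


set_option maxHeartbeats 1000000

lemma pdot_comm (u v : Fin 4 → ℝ) : pdot u v = pdot v u := by simp [pdot]; ring

lemma pdot_trip_left (u v w : Fin 4 → ℝ) : pdot (tripleProd u v w) u = 0 := by
  simp [pdot, tripleProd, det3]; ring

lemma pdot_trip_mid (u v w : Fin 4 → ℝ) : pdot (tripleProd u v w) v = 0 := by
  simp [pdot, tripleProd, det3]; ring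

lemma pdot_trip_right (u v w : Fin 4 → ℝ) : pdot (tripleProd u v w) w = 0 := by
  simp [pdot, tripleProd, det3]; ring

lemma pdot_trip_self (u v w : Fin 4 → ℝ) :
    pdot (tripleProd u v w) (tripleProd u v w) =
      det3 (pdot u u) (pdot u v) (pdot u w) (pdot u v) (pdot v v) (pdot v w)
        (pdot u w) (pdot v w) (pdot w w) := by
  simp [pdot, tripleProd, det3]; ring

lemma tripleProd_comb (G A B : Fin 4 → ℝ) (x1 x2 x3 y1 y2 y3 z1 z2 z3 : ℝ) :
    tripleProd (x1 • G + x2 • A + x3 • B) (y1 • G + y2 • A + y3 • B) (z1 • G + z2 • A + z3 • B)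
      = det3 x1 x2 x3 y1 y2 y3 z1 z2 z3 • tripleProd G A B := by
  funext i
  fin_cases i <;>
    simp [tripleProd, det3, Pi.add_apply, Pi.smul_apply, smul_eq_mul] <;> ring

lemma dual_gram (G A B M : Fin 4 → ℝ)
    (hGG : pdot G G = -1) (hAA : pdot A A = -1) (hBB : pdot B B = 1)
    (hGA : pdot G A = 0) (hGB : pdot G B = 0) (hAB : pdot A B = 0)
    (hMM : pdot M M = 1) (hMG : pdot M G = 0) (hMA : pdot M A = 0)
    (hMB : pdot M B = 0) (x : Fin 4 → ℝ) :
    x = (-(pdot x G)) • G + (-(pdot x A)) • A + (pdot x B) • B + (pdot x M) • M := by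
  have hEE : (Matrix.diagonal ![(-1:ℝ),-1,1,1]) * (Matrix.diagonal ![(-1:ℝ),-1,1,1]) = 1 := by
    ext i j
    fin_cases i <;> fin_cases j <;>
      simp [Matrix.mul_apply, Fin.sum_univ_four, Matrix.diagonal]
  have h1 : (Matrix.of (fun i j => ![G,A,B,M] i j)) * (Matrix.diagonal ![(-1:ℝ),-1,1,1]) *
      (Matrix.of (fun i j => ![G,A,B,M] i j)).transpose = Matrix.diagonal ![(-1:ℝ),-1,1,1] := by
    have hGG := hGG; have hAA := hAA; have hBB := hBB; have hGA := hGA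
    have hGB := hGB; have hAB := hAB; have hMM := hMM; have hMG := hMG
    have hMA := hMA; have hMB := hMB
    simp only [pdot] at hGG hAA hBB hGA hGB hAB hMM hMG hMA hMB
    ext i j
    fin_cases i <;> fin_cases j <;>
      · simp [Matrix.mul_apply, Matrix.transpose_apply, Fin.sum_univ_four, Matrix.diagonal]
        first
        | linear_combination hGG | linear_combination hAA | linear_combination hBB
        | linear_combination hGA | linear_combination hGB | linear_combination hAB
        | linear_combination hMM | linear_combination hMG | linear_combination hMA
        | linear_combination hMB
  have h2 : (Matrix.of (fun i j => ![G,A,B,M] i j)) *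
      ((Matrix.diagonal ![(-1:ℝ),-1,1,1]) *
        ((Matrix.of (fun i j => ![G,A,B,M] i j)).transpose * (Matrix.diagonal ![(-1:ℝ),-1,1,1]))) = 1 := by
    have h := congrArg (· * (Matrix.diagonal ![(-1:ℝ),-1,1,1])) h1
    rw [hEE] at h
    rw [← h]; simp only [Matrix.mul_assoc]
  have h3 := mul_eq_one_comm.mp h2
  have h4 : (Matrix.of (fun i j => ![G,A,B,M] i j)).transpose *
      (Matrix.diagonal ![(-1:ℝ),-1,1,1]) * (Matrix.of (fun i j => ![G,A,B,M] i j))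
      = Matrix.diagonal ![(-1:ℝ),-1,1,1] := by
    have h := congrArg ((Matrix.diagonal ![(-1:ℝ),-1,1,1]) * ·) h3
    simp only [Matrix.mul_one] at h
    calc (Matrix.of (fun i j => ![G,A,B,M] i j)).transpose *
          (Matrix.diagonal ![(-1:ℝ),-1,1,1]) * (Matrix.of (fun i j => ![G,A,B,M] i j))
        = (Matrix.diagonal ![(-1:ℝ),-1,1,1]) *
            ((Matrix.diagonal ![(-1:ℝ),-1,1,1]) *
              ((Matrix.of (fun i j => ![G,A,B,M] i j)).transpose *
                (Matrix.diagonal ![(-1:ℝ),-1,1,1])) * (Matrix.of (fun i j => ![G,A,B,M] i j))) := by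
          simp only [← Matrix.mul_assoc, hEE, Matrix.one_mul]
      _ = Matrix.diagonal ![(-1:ℝ),-1,1,1] := by
          simp only [Matrix.mul_assoc] at h ⊢
          exact h
  have H := fun k l => Matrix.ext_iff.mpr h4 k l
  funext k
  fin_cases k
  · have h0 := H 0 0; have h1' := H 1 0; have h2' := H 2 0; have h3' := H 3 0
    simp [Matrix.mul_apply, Matrix.transpose_apply, Fin.sum_univ_four,
      Matrix.diagonal] at h0 h1' h2' h3'
    simp only [show ((⟨0, by omega⟩ : Fin 4)) = 0 from rfl,
      Pi.add_apply, Pi.smul_apply, smul_eq_mul, pdot]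
    linear_combination (x 0) * h0 + (x 1) * h1' + (-(x 2)) * h2' + (-(x 3)) * h3'
  · have h0 := H 0 1; have h1' := H 1 1; have h2' := H 2 1; have h3' := H 3 1
    simp [Matrix.mul_apply, Matrix.transpose_apply, Fin.sum_univ_four,
      Matrix.diagonal] at h0 h1' h2' h3'
    simp only [show ((⟨1, by omega⟩ : Fin 4)) = 1 from rfl,
      Pi.add_apply, Pi.smul_apply, smul_eq_mul, pdot]
    linear_combination (x 0) * h0 + (x 1) * h1' + (-(x 2)) * h2' + (-(x 3)) * h3'
  · have h0 := H 0 2; have h1' := H 1 2; have h2' := H 2 2; have h3' := H 3 2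
    simp [Matrix.mul_apply, Matrix.transpose_apply, Fin.sum_univ_four,
      Matrix.diagonal] at h0 h1' h2' h3'
    simp only [show ((⟨2, by omega⟩ : Fin 4)) = 2 from rfl,
      Pi.add_apply, Pi.smul_apply, smul_eq_mul, pdot]
    linear_combination (x 0) * h0 + (x 1) * h1' + (-(x 2)) * h2' + (-(x 3)) * h3'
  · have h0 := H 0 3; have h1' := H 1 3; have h2' := H 2 3; have h3' := H 3 3
    simp [Matrix.mul_apply, Matrix.transpose_apply, Fin.sum_univ_four,
      Matrix.diagonal] at h0 h1' h2' h3'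
    simp only [show ((⟨3, by omega⟩ : Fin 4)) = 3 from rfl,
      Pi.add_apply, Pi.smul_apply, smul_eq_mul, pdot]
    linear_combination (x 0) * h0 + (x 1) * h1' + (-(x 2)) * h2' + (-(x 3)) * h3'

lemma hasDerivAt_pdot {u v : ℝ → Fin 4 → ℝ} {u' v' : Fin 4 → ℝ} {s : ℝ}
    (hu : HasDerivAt u u' s) (hv : HasDerivAt v v' s) :
    HasDerivAt (fun t => pdot (u t) (v t)) (pdot u' (v s) + pdot (u s) v') s := by
  have hu' := hasDerivAt_pi.mp hu
  have hv' := hasDerivAt_pi.mp hv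
  have h := ((((hu' 0).mul (hv' 0)).neg.sub ((hu' 1).mul (hv' 1))).add
      ((hu' 2).mul (hv' 2))).add ((hu' 3).mul (hv' 3))
  have he : (fun t => pdot (u t) (v t)) =
      fun t => -(u t 0 * v t 0) - u t 1 * v t 1 + u t 2 * v t 2 + u t 3 * v t 3 := by
    funext t; simp [pdot]
  rw [he]
  refine HasDerivAt.congr_deriv h ?_
  simp [pdot]; ring

lemma deriv_pdot_const {u v : ℝ → Fin 4 → ℝ} {u' v' : Fin 4 → ℝ} {s₀ c : ℝ} {I : Set ℝ}
    (hnI : I ∈ nhds s₀) (hc : ∀ s ∈ I, pdot (u s) (v s) = c)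
    (hu : HasDerivAt u u' s₀) (hv : HasDerivAt v v' s₀) :
    pdot u' (v s₀) + pdot (u s₀) v' = 0 := by
  have h1 := hasDerivAt_pdot hu hv
  have h2 : (fun t => pdot (u t) (v t)) =ᶠ[nhds s₀] (fun _ => c) :=
    Filter.eventually_of_mem hnI hc
  have h3 := h1.deriv
  rw [h2.deriv_eq] at h3
  simp at h3
  exact h3.symm

lemma cs_cases (c s P L R : ℝ) (hR : 0 < R) (hcs : c ^ 2 + s ^ 2 = 1)
    (hR2 : R ^ 2 = P ^ 2 + L ^ 2) (h0 : c * P + s * L = 0) :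
    (c * R = L ∧ s * R = -P) ∨ (c * R = -L ∧ s * R = P) := by
  have h1 : (c * R - L) * (c * R + L) = 0 := by
    linear_combination (c ^ 2) * hR2 + (L ^ 2) * hcs + (c * P - s * L) * h0
  have h2 : (s * R - P) * (s * R + P) = 0 := by
    linear_combination (s ^ 2) * hR2 + (P ^ 2) * hcs + (s * L - c * P) * h0
  have h3 : (c * R) * (s * R) = -(L * P) := by
    linear_combination (c * s) * hR2 - (L * P) * hcs + (c * L + s * P) * h0
  rcases mul_eq_zero.mp h1 with hc | hc <;> rcases mul_eq_zero.mp h2 with hs | hs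
  · have hcl : c * R = L := by linarith
    have hsp : s * R = P := by linarith
    rw [hcl, hsp] at h3
    have hLP : L * P = 0 := by linarith
    rcases mul_eq_zero.mp hLP with h | h
    · exact Or.inr ⟨by rw [hcl, h]; ring, hsp⟩
    · exact Or.inl ⟨hcl, by rw [hsp, h]; ring⟩
  · exact Or.inl ⟨by linarith, by linarith⟩
  · exact Or.inr ⟨by linarith, by linarith⟩
  · have hcl : c * R = -L := by linarith
    have hsp : s * R = -P := by linarith
    rw [hcl, hsp] at h3
    have hLP : L * P = 0 := by linarith
    rcases mul_eq_zero.mp hLP with h | h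
    · exact Or.inl ⟨by rw [hcl, h]; ring, hsp⟩
    · exact Or.inr ⟨hcl, by rw [hsp, h]; ring⟩


theorem spacelike_focal_surface_singularities
    (I : Set ℝ) (hI : IsOpen I) (hIc : I.OrdConnected)
    (γ f₁ f₂ : ℝ → Fin 4 → ℝ)
    (hfr : SpacelikeFramed I γ f₁ f₂ (-1))
    (α ℓh nh : ℝ → ℝ)
    (hA : ∀ s ∈ I, α s = scurvA γ f₁ f₂ s)
    (hL : ∀ s ∈ I, ℓh s = scurvL (-1) f₁ f₂ s)
    (hM0 : ∀ s ∈ I, scurvM γ f₁ f₂ s = 0)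
    (hN : ∀ s ∈ I, nh s = scurvN γ f₁ f₂ s)
    (himm : ∀ s ∈ I, ¬(α s = 0 ∧ ℓh s = 0 ∧ nh s = 0))
    (hlt : ∀ s ∈ I, (α s) ^ 2 < (nh s) ^ 2)
    (hg : ∀ s ∈ I, sG α ℓh nh (-1) s < 0)
    (ζ : ℝ → Fin 4 → ℝ)
    (hζ : ∀ s, ζ s = (Real.sqrt ((nh s) ^ 2 - (α s) ^ 2))⁻¹ • (nh s • γ s - α s • f₂ s))
    (F : ℝ → ℝ → Fin 4 → ℝ)
    (hF : ∀ s ϑ, F s ϑ = Real.cos ϑ • ζ s + Real.sin ϑ • f₁ s) :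
    ∀ s₀ ∈ I, ∀ θ₀ : ℝ,
      pdot (ζ s₀) (ζ s₀) = -1 ∧
      pdot (F s₀ θ₀) (F s₀ θ₀) = -1 ∧
      (tripleProd (F s₀ θ₀) (deriv (fun s => F s θ₀) s₀) (deriv (F s₀) θ₀) = 0 ↔
        Real.cos θ₀ * (α s₀ * deriv nh s₀ - nh s₀ * deriv α s₀)
          + Real.sin θ₀ * (ℓh s₀ * nh s₀ * Real.sqrt ((nh s₀) ^ 2 - (α s₀) ^ 2)) = 0) ∧
      (tripleProd (F s₀ θ₀) (deriv (fun s => F s θ₀) s₀) (deriv (F s₀) θ₀) = 0 →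
        F s₀ θ₀ = sEvolute γ f₁ f₂ α ℓh nh (-1) s₀ ∨
        F s₀ θ₀ = -sEvolute γ f₁ f₂ α ℓh nh (-1) s₀) := by
  intro s₀ hs₀ θ₀
  have hnI : I ∈ nhds s₀ := hI.mem_nhds hs₀
  -- differentiability
  have hγd : DifferentiableAt ℝ γ s₀ :=
    (hfr.smooth_γ.differentiableOn (by simp)).differentiableAt hnI
  have h1d : DifferentiableAt ℝ f₁ s₀ :=
    (hfr.smooth_v₁.differentiableOn (by simp)).differentiableAt hnI
  have h2d : DifferentiableAt ℝ f₂ s₀ :=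
    (hfr.smooth_v₂.differentiableOn (by simp)).differentiableAt hnI
  have hγ' : HasDerivAt γ (deriv γ s₀) s₀ := hγd.hasDerivAt
  have h1' : HasDerivAt f₁ (deriv f₁ s₀) s₀ := h1d.hasDerivAt
  have h2' : HasDerivAt f₂ (deriv f₂ s₀) s₀ := h2d.hasDerivAt
  -- Gram data
  have hGG : pdot (γ s₀) (γ s₀) = -1 := hfr.ads s₀ hs₀
  have hAA : pdot (f₁ s₀) (f₁ s₀) = -1 := hfr.normv₁ s₀ hs₀
  have hBB : pdot (f₂ s₀) (f₂ s₀) = 1 := by have := hfr.normv₂ s₀ hs₀; linarith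
  have hGA : pdot (γ s₀) (f₁ s₀) = 0 := hfr.orth₁ s₀ hs₀
  have hGB : pdot (γ s₀) (f₂ s₀) = 0 := hfr.orth₂ s₀ hs₀
  have hAB : pdot (f₁ s₀) (f₂ s₀) = 0 := hfr.orth₃ s₀ hs₀
  have hMG := pdot_trip_left (γ s₀) (f₁ s₀) (f₂ s₀)
  have hMA := pdot_trip_mid (γ s₀) (f₁ s₀) (f₂ s₀)
  have hMB := pdot_trip_right (γ s₀) (f₁ s₀) (f₂ s₀)
  have hMM : pdot (tripleProd (γ s₀) (f₁ s₀) (f₂ s₀)) (tripleProd (γ s₀) (f₁ s₀) (f₂ s₀)) = 1 := by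
    rw [pdot_trip_self, hGG, hAA, hBB, hGA, hGB, hAB]; norm_num [det3]
  -- curvature data
  have ha : α s₀ = pdot (deriv γ s₀) (tripleProd (γ s₀) (f₁ s₀) (f₂ s₀)) := by
    have := hA s₀ hs₀; simpa [scurvA, muOf] using this
  have hlval : pdot (deriv f₁ s₀) (f₂ s₀) = ℓh s₀ := by
    have := hL s₀ hs₀; simp [scurvL] at this; linarith
  have hmval : pdot (deriv f₁ s₀) (tripleProd (γ s₀) (f₁ s₀) (f₂ s₀)) = 0 := by
    have := hM0 s₀ hs₀; simpa [scurvM, muOf] using this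
  have hnval : nh s₀ = pdot (deriv f₂ s₀) (tripleProd (γ s₀) (f₁ s₀) (f₂ s₀)) := by
    have := hN s₀ hs₀; simpa [scurvN, muOf] using this
  -- differentiating constant products
  have e1 := deriv_pdot_const hnI hfr.ads hγ' hγ'
  have e2 := deriv_pdot_const hnI hfr.orth₁ hγ' h1'
  have e3 := deriv_pdot_const hnI hfr.orth₂ hγ' h2'
  have e4 := deriv_pdot_const hnI hfr.normv₁ h1' h1'
  have e5 := deriv_pdot_const hnI hfr.normv₂ h2' h2'
  have e6 := deriv_pdot_const hnI hfr.orth₃ h1' h2'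
  have ht1 : pdot (deriv γ s₀) (f₁ s₀) = 0 := hfr.tangent₁ s₀ hs₀
  have ht2 : pdot (deriv γ s₀) (f₂ s₀) = 0 := hfr.tangent₂ s₀ hs₀
  have hApG : pdot (deriv f₁ s₀) (γ s₀) = 0 := by
    rw [pdot_comm]; rw [ht1] at e2; linarith [e2]
  have hApA : pdot (deriv f₁ s₀) (f₁ s₀) = 0 := by
    have := pdot_comm (f₁ s₀) (deriv f₁ s₀); linarith [e4]
  have hBpG : pdot (deriv f₂ s₀) (γ s₀) = 0 := by
    rw [pdot_comm]; rw [ht2] at e3; linarith [e3]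
  have hBpA : pdot (deriv f₂ s₀) (f₁ s₀) = - ℓh s₀ := by
    have := pdot_comm (f₁ s₀) (deriv f₂ s₀); rw [hlval] at e6; linarith [e6]
  have hBpB : pdot (deriv f₂ s₀) (f₂ s₀) = 0 := by
    have := pdot_comm (f₂ s₀) (deriv f₂ s₀); linarith [e5]
  have hGpG : pdot (deriv γ s₀) (γ s₀) = 0 := by
    have := pdot_comm (γ s₀) (deriv γ s₀); linarith [e1]
  -- Frenet formulas
  have hGpEq : deriv γ s₀ = (α s₀) • (tripleProd (γ s₀) (f₁ s₀) (f₂ s₀)) := by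
    have h := dual_gram (γ s₀) (f₁ s₀) (f₂ s₀) (tripleProd (γ s₀) (f₁ s₀) (f₂ s₀)) hGG hAA hBB hGA hGB hAB hMM hMG hMA hMB
      (deriv γ s₀)
    rw [hGpG, ht1, ht2, ← ha] at h
    simpa using h
  have hApEq : deriv f₁ s₀ = (ℓh s₀) • (f₂ s₀) := by
    have h := dual_gram (γ s₀) (f₁ s₀) (f₂ s₀) (tripleProd (γ s₀) (f₁ s₀) (f₂ s₀)) hGG hAA hBB hGA hGB hAB hMM hMG hMA hMB
      (deriv f₁ s₀)
    rw [hApG, hApA, hlval, hmval] at h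
    simpa using h
  have hBpEq : deriv f₂ s₀ = (ℓh s₀) • (f₁ s₀) + (nh s₀) • (tripleProd (γ s₀) (f₁ s₀) (f₂ s₀)) := by
    have h := dual_gram (γ s₀) (f₁ s₀) (f₂ s₀) (tripleProd (γ s₀) (f₁ s₀) (f₂ s₀)) hGG hAA hBB hGA hGB hAB hMM hMG hMA hMB
      (deriv f₂ s₀)
    rw [hBpG, hBpA, hBpB, ← hnval] at h
    simpa using h
  -- sqrt facts
  have hlt0 : (α s₀) ^ 2 < (nh s₀) ^ 2 := hlt s₀ hs₀
  have hqpos : 0 < nh s₀ ^ 2 - α s₀ ^ 2 := by linarith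
  have hρpos : 0 < Real.sqrt (nh s₀ ^ 2 - α s₀ ^ 2) := Real.sqrt_pos.mpr hqpos
  have hρne : Real.sqrt (nh s₀ ^ 2 - α s₀ ^ 2) ≠ 0 := ne_of_gt hρpos
  have hρsq : (Real.sqrt (nh s₀ ^ 2 - α s₀ ^ 2)) ^ 2 = nh s₀ ^ 2 - α s₀ ^ 2 := Real.sq_sqrt hqpos.le
  have hw2 : ((Real.sqrt (nh s₀ ^ 2 - α s₀ ^ 2))⁻¹) ^ 2 * (nh s₀ ^ 2 - α s₀ ^ 2) = 1 := by
    rw [inv_pow, hρsq]; exact inv_mul_cancel₀ hqpos.ne'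
  have hw1 : (Real.sqrt (nh s₀ ^ 2 - α s₀ ^ 2)) * ((Real.sqrt (nh s₀ ^ 2 - α s₀ ^ 2))⁻¹) = 1 := mul_inv_cancel₀ hρne
  have hcs : Real.sin θ₀ ^ 2 + Real.cos θ₀ ^ 2 = 1 := Real.sin_sq_add_cos_sq θ₀
  -- conclusion 1 : pdot ζ ζ = -1
  have hZZ : pdot (ζ s₀) (ζ s₀) = -1 := by
    rw [hζ]
    have hx : pdot (((Real.sqrt (nh s₀ ^ 2 - α s₀ ^ 2))⁻¹) • (nh s₀ • γ s₀ - α s₀ • f₂ s₀)) (((Real.sqrt (nh s₀ ^ 2 - α s₀ ^ 2))⁻¹) • (nh s₀ • γ s₀ - α s₀ • f₂ s₀))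
        = ((Real.sqrt (nh s₀ ^ 2 - α s₀ ^ 2))⁻¹) ^ 2 * (nh s₀ ^ 2 * pdot (γ s₀) (γ s₀) - 2 * (nh s₀ * α s₀) * pdot (γ s₀) (f₂ s₀)
            + α s₀ ^ 2 * pdot (f₂ s₀) (f₂ s₀)) := by
      simp [pdot]; ring
    rw [hx, hGG, hGB, hBB]
    linear_combination (-1) * hw2
  have hZA : pdot (ζ s₀) (f₁ s₀) = 0 := by
    rw [hζ]
    have hBA : pdot (f₂ s₀) (f₁ s₀) = 0 := by rw [pdot_comm]; exact hAB
    have hx : pdot (((Real.sqrt (nh s₀ ^ 2 - α s₀ ^ 2))⁻¹) • (nh s₀ • γ s₀ - α s₀ • f₂ s₀)) (f₁ s₀)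
        = ((Real.sqrt (nh s₀ ^ 2 - α s₀ ^ 2))⁻¹) * (nh s₀ * pdot (γ s₀) (f₁ s₀) - α s₀ * pdot (f₂ s₀) (f₁ s₀)) := by
      simp [pdot]; ring
    rw [hx, hGA, hBA]; ring
  -- conclusion 2 : pdot F F = -1
  have hFF : pdot (F s₀ θ₀) (F s₀ θ₀) = -1 := by
    rw [hF]
    have hx : pdot (Real.cos θ₀ • ζ s₀ + Real.sin θ₀ • f₁ s₀) (Real.cos θ₀ • ζ s₀ + Real.sin θ₀ • f₁ s₀)
        = Real.cos θ₀ ^ 2 * pdot (ζ s₀) (ζ s₀) + 2 * (Real.cos θ₀ * Real.sin θ₀) * pdot (ζ s₀) (f₁ s₀)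
          + Real.sin θ₀ ^ 2 * pdot (f₁ s₀) (f₁ s₀) := by
      simp [pdot]; ring
    rw [hx, hZZ, hZA, hAA]
    linear_combination (-1) * hcs
  -- differentiability of α and nh
  have hdγ : ContDiffOn ℝ (⊤ : ℕ∞) (deriv γ) I := hfr.smooth_γ.deriv_of_isOpen hI (by simp)
  have hdf₂ : ContDiffOn ℝ (⊤ : ℕ∞) (deriv f₂) I := hfr.smooth_v₂.deriv_of_isOpen hI (by simp)
  have hγ'd : DifferentiableAt ℝ (deriv γ) s₀ :=
    (hdγ.differentiableOn (by simp)).differentiableAt hnI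
  have hf₂'d : DifferentiableAt ℝ (deriv f₂) s₀ :=
    (hdf₂.differentiableOn (by simp)).differentiableAt hnI
  have compdiff : ∀ (f : ℝ → Fin 4 → ℝ), DifferentiableAt ℝ f s₀ →
      ∀ i, DifferentiableAt ℝ (fun t => f t i) s₀ := fun f hf i =>
    (hasDerivAt_pi.mp hf.hasDerivAt i).differentiableAt
  have hμd : DifferentiableAt ℝ (muOf γ f₁ f₂) s₀ := by
    have c1 := compdiff γ hγd; have c2 := compdiff f₁ h1d; have c3 := compdiff f₂ h2d
    have c10 := c1 0; have c11 := c1 1; have c12 := c1 2; have c13 := c1 3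
    have c20 := c2 0; have c21 := c2 1; have c22 := c2 2; have c23 := c2 3
    have c30 := c3 0; have c31 := c3 1; have c32 := c3 2; have c33 := c3 3
    rw [differentiableAt_pi]
    intro i
    fin_cases i
    · simp only [muOf, tripleProd, det3, show ((⟨0, by omega⟩ : Fin 4)) = 0 from rfl,
        Matrix.cons_val_zero, Matrix.cons_val_one, Matrix.head_cons, Matrix.cons_val_two,
        Matrix.tail_cons, Matrix.cons_val_three]
      fun_prop
    · simp only [muOf, tripleProd, det3, show ((⟨1, by omega⟩ : Fin 4)) = 1 from rfl,
        Matrix.cons_val_zero, Matrix.cons_val_one, Matrix.head_cons, Matrix.cons_val_two,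
        Matrix.tail_cons, Matrix.cons_val_three]
      fun_prop
    · simp only [muOf, tripleProd, det3, show ((⟨2, by omega⟩ : Fin 4)) = 2 from rfl,
        Matrix.cons_val_zero, Matrix.cons_val_one, Matrix.head_cons, Matrix.cons_val_two,
        Matrix.tail_cons, Matrix.cons_val_three]
      fun_prop
    · simp only [muOf, tripleProd, det3, show ((⟨3, by omega⟩ : Fin 4)) = 3 from rfl,
        Matrix.cons_val_zero, Matrix.cons_val_one, Matrix.head_cons, Matrix.cons_val_two,
        Matrix.tail_cons, Matrix.cons_val_three]
      fun_prop
  have hαd : DifferentiableAt ℝ α s₀ := by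
    have h1 : DifferentiableAt ℝ (fun s => scurvA γ f₁ f₂ s) s₀ := by
      simp only [scurvA]
      exact (hasDerivAt_pdot hγ'd.hasDerivAt hμd.hasDerivAt).differentiableAt
    have h2 : α =ᶠ[nhds s₀] fun s => scurvA γ f₁ f₂ s := Filter.eventually_of_mem hnI hA
    exact h2.differentiableAt_iff.mpr h1
  have hnd : DifferentiableAt ℝ nh s₀ := by
    have h1 : DifferentiableAt ℝ (fun s => scurvN γ f₁ f₂ s) s₀ := by
      simp only [scurvN]
      exact (hasDerivAt_pdot hf₂'d.hasDerivAt hμd.hasDerivAt).differentiableAt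
    have h2 : nh =ᶠ[nhds s₀] fun s => scurvN γ f₁ f₂ s := Filter.eventually_of_mem hnI hN
    exact h2.differentiableAt_iff.mpr h1
  have hαd' : HasDerivAt α (deriv α s₀) s₀ := hαd.hasDerivAt
  have hnd' : HasDerivAt nh (deriv nh s₀) s₀ := hnd.hasDerivAt
  -- derivative of ζ
  have hζfun : ζ = fun s => (Real.sqrt (nh s ^ 2 - α s ^ 2))⁻¹ • (nh s • γ s - α s • f₂ s) :=
    funext hζ
  have hq : HasDerivAt (fun s => nh s ^ 2 - α s ^ 2)
      (2 * nh s₀ * deriv nh s₀ - 2 * α s₀ * deriv α s₀) s₀ := by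
    have h := (hnd'.pow 2).sub (hαd'.pow 2)
    refine HasDerivAt.congr_deriv h ?_
    rw [show (2:ℕ) - 1 = 1 from rfl]; push_cast; ring
  have hsq : HasDerivAt (fun s => Real.sqrt (nh s ^ 2 - α s ^ 2))
      ((2 * nh s₀ * deriv nh s₀ - 2 * α s₀ * deriv α s₀) / (2 * (Real.sqrt (nh s₀ ^ 2 - α s₀ ^ 2)))) s₀ :=
    hq.sqrt (ne_of_gt hqpos)
  have hinv0 : HasDerivAt (fun s => (Real.sqrt (nh s ^ 2 - α s ^ 2))⁻¹)
      (-((2 * nh s₀ * deriv nh s₀ - 2 * α s₀ * deriv α s₀) / (2 * (Real.sqrt (nh s₀ ^ 2 - α s₀ ^ 2)))) / (Real.sqrt (nh s₀ ^ 2 - α s₀ ^ 2)) ^ 2)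
      s₀ := hsq.inv hρne
  have hinvval : -((2 * nh s₀ * deriv nh s₀ - 2 * α s₀ * deriv α s₀) / (2 * (Real.sqrt (nh s₀ ^ 2 - α s₀ ^ 2)))) / (Real.sqrt (nh s₀ ^ 2 - α s₀ ^ 2)) ^ 2
      = -(nh s₀ * deriv nh s₀ - α s₀ * deriv α s₀) * ((Real.sqrt (nh s₀ ^ 2 - α s₀ ^ 2))⁻¹) ^ 3 := by
    field_simp
  rw [hinvval] at hinv0
  have hvec : HasDerivAt (fun s => nh s • γ s - α s • f₂ s)
      ((nh s₀ • deriv γ s₀ + deriv nh s₀ • γ s₀) - (α s₀ • deriv f₂ s₀ + deriv α s₀ • f₂ s₀))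
      s₀ := (hnd'.smul hγ').sub (hαd'.smul h2')
  have hζd : HasDerivAt ζ
      (((Real.sqrt (nh s₀ ^ 2 - α s₀ ^ 2))⁻¹) • ((nh s₀ • deriv γ s₀ + deriv nh s₀ • γ s₀)
          - (α s₀ • deriv f₂ s₀ + deriv α s₀ • f₂ s₀))
        + (-(nh s₀ * deriv nh s₀ - α s₀ * deriv α s₀) * ((Real.sqrt (nh s₀ ^ 2 - α s₀ ^ 2))⁻¹) ^ 3)
          • (nh s₀ • γ s₀ - α s₀ • f₂ s₀)) s₀ := by
    rw [hζfun]
    exact hinv0.smul hvec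
  have hnicev : ((Real.sqrt (nh s₀ ^ 2 - α s₀ ^ 2))⁻¹) • ((nh s₀ • deriv γ s₀ + deriv nh s₀ • γ s₀)
          - (α s₀ • deriv f₂ s₀ + deriv α s₀ • f₂ s₀))
        + (-(nh s₀ * deriv nh s₀ - α s₀ * deriv α s₀) * ((Real.sqrt (nh s₀ ^ 2 - α s₀ ^ 2))⁻¹) ^ 3)
          • (nh s₀ • γ s₀ - α s₀ • f₂ s₀)
      = (-(α s₀ * (α s₀ * deriv nh s₀ - nh s₀ * deriv α s₀)) * (Real.sqrt (nh s₀ ^ 2 - α s₀ ^ 2))⁻¹ ^ 3) • γ s₀ + (-(α s₀ * ℓh s₀) * (Real.sqrt (nh s₀ ^ 2 - α s₀ ^ 2))⁻¹) • f₁ s₀ + ((nh s₀ * (α s₀ * deriv nh s₀ - nh s₀ * deriv α s₀)) * (Real.sqrt (nh s₀ ^ 2 - α s₀ ^ 2))⁻¹ ^ 3) • f₂ s₀ := by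
    rw [hGpEq, hBpEq]
    funext i
    simp only [Pi.add_apply, Pi.sub_apply, Pi.smul_apply, smul_eq_mul]
    linear_combination ((deriv α s₀ * ((Real.sqrt (nh s₀ ^ 2 - α s₀ ^ 2))⁻¹) * f₂ s₀ i)
      - (deriv nh s₀ * ((Real.sqrt (nh s₀ ^ 2 - α s₀ ^ 2))⁻¹) * γ s₀ i)) * hw2
  rw [hnicev] at hζd
  -- derivative of F in s and θ
  have hA'l : HasDerivAt f₁ ((ℓh s₀) • (f₂ s₀)) s₀ := by
    have h := h1'; rw [hApEq] at h; exact h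
  have hFsfun : (fun s => F s θ₀) = fun s => Real.cos θ₀ • ζ s + Real.sin θ₀ • f₁ s :=
    funext fun s => hF s θ₀
  have hFsd : HasDerivAt (fun s => F s θ₀) (Real.cos θ₀ • ((-(α s₀ * (α s₀ * deriv nh s₀ - nh s₀ * deriv α s₀)) * (Real.sqrt (nh s₀ ^ 2 - α s₀ ^ 2))⁻¹ ^ 3) • γ s₀ + (-(α s₀ * ℓh s₀) * (Real.sqrt (nh s₀ ^ 2 - α s₀ ^ 2))⁻¹) • f₁ s₀ + ((nh s₀ * (α s₀ * deriv nh s₀ - nh s₀ * deriv α s₀)) * (Real.sqrt (nh s₀ ^ 2 - α s₀ ^ 2))⁻¹ ^ 3) • f₂ s₀) + Real.sin θ₀ • (ℓh s₀ • f₂ s₀)) s₀ := by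
    rw [hFsfun]
    exact (hζd.const_smul (Real.cos θ₀)).add (hA'l.const_smul (Real.sin θ₀))
  have hFθfun : F s₀ = fun θ => Real.cos θ • ζ s₀ + Real.sin θ • f₁ s₀ :=
    funext fun θ => hF s₀ θ
  have hFθd : HasDerivAt (F s₀) ((-Real.sin θ₀) • ζ s₀ + Real.cos θ₀ • f₁ s₀) θ₀ := by
    rw [hFθfun]
    exact ((Real.hasDerivAt_cos θ₀).smul_const (ζ s₀)).add
      ((Real.hasDerivAt_sin θ₀).smul_const (f₁ s₀))
  -- combo forms
  have hF0c : F s₀ θ₀ = (Real.cos θ₀ * (nh s₀ * (Real.sqrt (nh s₀ ^ 2 - α s₀ ^ 2))⁻¹)) • (γ s₀) + Real.sin θ₀ • (f₁ s₀) + (-(Real.cos θ₀ * (α s₀ * (Real.sqrt (nh s₀ ^ 2 - α s₀ ^ 2))⁻¹))) • (f₂ s₀) := by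
    rw [hF, hζ]
    funext i
    simp only [Pi.add_apply, Pi.sub_apply, Pi.smul_apply, smul_eq_mul]
    ring
  have hFsc : (Real.cos θ₀ • ((-(α s₀ * (α s₀ * deriv nh s₀ - nh s₀ * deriv α s₀)) * (Real.sqrt (nh s₀ ^ 2 - α s₀ ^ 2))⁻¹ ^ 3) • γ s₀ + (-(α s₀ * ℓh s₀) * (Real.sqrt (nh s₀ ^ 2 - α s₀ ^ 2))⁻¹) • f₁ s₀ + ((nh s₀ * (α s₀ * deriv nh s₀ - nh s₀ * deriv α s₀)) * (Real.sqrt (nh s₀ ^ 2 - α s₀ ^ 2))⁻¹ ^ 3) • f₂ s₀) + Real.sin θ₀ • (ℓh s₀ • f₂ s₀)) = (-(Real.cos θ₀ * (α s₀ * (α s₀ * deriv nh s₀ - nh s₀ * deriv α s₀)) * (Real.sqrt (nh s₀ ^ 2 - α s₀ ^ 2))⁻¹ ^ 3)) • (γ s₀) + (-(Real.cos θ₀ * (α s₀ * ℓh s₀) * (Real.sqrt (nh s₀ ^ 2 - α s₀ ^ 2))⁻¹)) • (f₁ s₀) + (Real.cos θ₀ * (nh s₀ * (α s₀ * deriv nh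 s₀ - nh s₀ * deriv α s₀)) * (Real.sqrt (nh s₀ ^ 2 - α s₀ ^ 2))⁻¹ ^ 3 + Real.sin θ₀ * ℓh s₀) • (f₂ s₀) := by
    funext i
    simp only [Pi.add_apply, Pi.sub_apply, Pi.smul_apply, smul_eq_mul]
    ring
  have hFθc : ((-Real.sin θ₀) • ζ s₀ + Real.cos θ₀ • f₁ s₀) = (-(Real.sin θ₀ * (nh s₀ * (Real.sqrt (nh s₀ ^ 2 - α s₀ ^ 2))⁻¹))) • (γ s₀) + Real.cos θ₀ • (f₁ s₀) + (Real.sin θ₀ * (α s₀ * (Real.sqrt (nh s₀ ^ 2 - α s₀ ^ 2))⁻¹)) • (f₂ s₀) := by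
    rw [hζ]
    funext i
    simp only [Pi.add_apply, Pi.sub_apply, Pi.smul_apply, smul_eq_mul, Pi.neg_apply]
    ring
  have hT : tripleProd (F s₀ θ₀) (deriv (fun s => F s θ₀) s₀) (deriv (F s₀) θ₀)
      = (det3 (Real.cos θ₀ * (nh s₀ * (Real.sqrt (nh s₀ ^ 2 - α s₀ ^ 2))⁻¹)) (Real.sin θ₀) (-(Real.cos θ₀ * (α s₀ * (Real.sqrt (nh s₀ ^ 2 - α s₀ ^ 2))⁻¹))) (-(Real.cos θ₀ * (α s₀ * (α s₀ * deriv nh s₀ - nh s₀ * deriv α s₀)) * (Real.sqrt (nh s₀ ^ 2 - α s₀ ^ 2))⁻¹ ^ 3)) (-(Real.cos θ₀ * (α s₀ * ℓh s₀) * (Real.sqrt (nh s₀ ^ 2 - α s₀ ^ 2))⁻¹)) (Real.cos θ₀ * (nh s₀ * (α s₀ * deriv nh s₀ - nh s₀ * deriv α s₀)) * (Real.sqrt (nh s₀ ^ 2 - α s₀ ^ 2))⁻¹ ^ 3 + Real.sin θ₀ * ℓh s₀) (-(Real.sin θ₀ * (nh s₀ * (Real.sqrt (nh s₀ ^ 2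 - α s₀ ^ 2))⁻¹))) (Real.cos θ₀) (Real.sin θ₀ * (α s₀ * (Real.sqrt (nh s₀ ^ 2 - α s₀ ^ 2))⁻¹))) • (tripleProd (γ s₀) (f₁ s₀) (f₂ s₀)) := by
    rw [hFsd.deriv, hFθd.deriv, hF0c, hFsc, hFθc, tripleProd_comb]
  have hdet : (det3 (Real.cos θ₀ * (nh s₀ * (Real.sqrt (nh s₀ ^ 2 - α s₀ ^ 2))⁻¹)) (Real.sin θ₀) (-(Real.cos θ₀ * (α s₀ * (Real.sqrt (nh s₀ ^ 2 - α s₀ ^ 2))⁻¹))) (-(Real.cos θ₀ * (α s₀ * (α s₀ * deriv nh s₀ - nh s₀ * deriv α s₀)) * (Real.sqrt (nh s₀ ^ 2 - α s₀ ^ 2))⁻¹ ^ 3)) (-(Real.cos θ₀ * (α s₀ * ℓh s₀) * (Real.sqrt (nh s₀ ^ 2 - α s₀ ^ 2))⁻¹)) (Real.cos θ₀ * (nh s₀ * (α s₀ * deriv nh s₀ - nh s₀ * deriv α s₀)) * (Real.sqrt (nh s₀ ^ 2 - α s₀ ^ 2))⁻¹ ^ 3 + Real.sin θ₀ * ℓh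 s₀) (-(Real.sin θ₀ * (nh s₀ * (Real.sqrt (nh s₀ ^ 2 - α s₀ ^ 2))⁻¹))) (Real.cos θ₀) (Real.sin θ₀ * (α s₀ * (Real.sqrt (nh s₀ ^ 2 - α s₀ ^ 2))⁻¹))) = -(Real.cos θ₀ * (α s₀ * deriv nh s₀ - nh s₀ * deriv α s₀) + Real.sin θ₀ * (ℓh s₀ * nh s₀ * Real.sqrt (nh s₀ ^ 2 - α s₀ ^ 2))) * ((Real.sqrt (nh s₀ ^ 2 - α s₀ ^ 2))⁻¹) ^ 2 := by
    rw [det3]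
    linear_combination (-(Real.cos θ₀ * (α s₀ * deriv nh s₀ - nh s₀ * deriv α s₀) * ((Real.sqrt (nh s₀ ^ 2 - α s₀ ^ 2))⁻¹) ^ 4 * (nh s₀ ^ 2 - α s₀ ^ 2)
        + Real.sin θ₀ * (ℓh s₀ * nh s₀) * ((Real.sqrt (nh s₀ ^ 2 - α s₀ ^ 2))⁻¹))) * hcs
      + (-(Real.cos θ₀ * (α s₀ * deriv nh s₀ - nh s₀ * deriv α s₀) * ((Real.sqrt (nh s₀ ^ 2 - α s₀ ^ 2))⁻¹) ^ 2)) * hw2 + (Real.sin θ₀ * (ℓh s₀ * nh s₀) * ((Real.sqrt (nh s₀ ^ 2 - α s₀ ^ 2))⁻¹)) * hw1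
  have hMne : (tripleProd (γ s₀) (f₁ s₀) (f₂ s₀)) ≠ 0 := by
    intro h
    rw [h] at hMM
    simp [pdot] at hMM
  have hWne : ((Real.sqrt (nh s₀ ^ 2 - α s₀ ^ 2))⁻¹) ≠ 0 := inv_ne_zero hρne
  have hiff : tripleProd (F s₀ θ₀) (deriv (fun s => F s θ₀) s₀) (deriv (F s₀) θ₀) = 0 ↔
      (Real.cos θ₀ * (α s₀ * deriv nh s₀ - nh s₀ * deriv α s₀) + Real.sin θ₀ * (ℓh s₀ * nh s₀ * Real.sqrt (nh s₀ ^ 2 - α s₀ ^ 2))) = 0 := by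
    rw [hT]
    constructor
    · intro h
      rcases smul_eq_zero.mp h with h' | h'
      · rw [hdet] at h'
        rcases mul_eq_zero.mp h' with h'' | h''
        · linarith [neg_eq_zero.mp h'']
        · exact absurd h'' (pow_ne_zero 2 hWne)
      · exact absurd h' hMne
    · intro h
      rw [hdet, h]
      simp
  refine ⟨hZZ, hFF, hiff, ?_⟩
  -- singular points are on the evolute
  intro hsing
  have hcond : (Real.cos θ₀ * (α s₀ * deriv nh s₀ - nh s₀ * deriv α s₀) + Real.sin θ₀ * (ℓh s₀ * nh s₀ * Real.sqrt (nh s₀ ^ 2 - α s₀ ^ 2))) = 0 := hiff.mp hsing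
  have hsgval : sG α ℓh nh (-1) s₀ = -((α s₀ * deriv nh s₀ - nh s₀ * deriv α s₀) ^ 2 + ((ℓh s₀ * nh s₀ * Real.sqrt (nh s₀ ^ 2 - α s₀ ^ 2))) ^ 2) := by
    rw [sG]
    linear_combination (ℓh s₀ ^ 2 * nh s₀ ^ 2) * hρsq
  have hgneg := hg s₀ hs₀
  have hPLpos : 0 < (α s₀ * deriv nh s₀ - nh s₀ * deriv α s₀) ^ 2 + ((ℓh s₀ * nh s₀ * Real.sqrt (nh s₀ ^ 2 - α s₀ ^ 2))) ^ 2 := by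
    rw [hsgval] at hgneg; linarith
  have habs : |sG α ℓh nh (-1) s₀| = (α s₀ * deriv nh s₀ - nh s₀ * deriv α s₀) ^ 2 + ((ℓh s₀ * nh s₀ * Real.sqrt (nh s₀ ^ 2 - α s₀ ^ 2))) ^ 2 := by
    rw [hsgval, abs_neg, abs_of_pos hPLpos]
  have hR2 : (Real.sqrt |sG α ℓh nh (-1) s₀|) ^ 2 = (α s₀ * deriv nh s₀ - nh s₀ * deriv α s₀) ^ 2 + ((ℓh s₀ * nh s₀ * Real.sqrt (nh s₀ ^ 2 - α s₀ ^ 2))) ^ 2 := by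
    rw [habs]; exact Real.sq_sqrt hPLpos.le
  have hRpos : 0 < (Real.sqrt |sG α ℓh nh (-1) s₀|) := Real.sqrt_pos.mpr (by rw [habs]; exact hPLpos)
  have hRne : (Real.sqrt |sG α ℓh nh (-1) s₀|) ≠ 0 := ne_of_gt hRpos
  have hcs' : (Real.cos θ₀) ^ 2 + (Real.sin θ₀) ^ 2 = 1 := by linarith
  have hcond' : (Real.cos θ₀) * ((α s₀ * deriv nh s₀ - nh s₀ * deriv α s₀)) + (Real.sin θ₀) * ((ℓh s₀ * nh s₀ * Real.sqrt (nh s₀ ^ 2 - α s₀ ^ 2))) = 0 := by linear_combination hcond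
  rcases cs_cases (Real.cos θ₀) (Real.sin θ₀) ((α s₀ * deriv nh s₀ - nh s₀ * deriv α s₀)) ((ℓh s₀ * nh s₀ * Real.sqrt (nh s₀ ^ 2 - α s₀ ^ 2))) (Real.sqrt |sG α ℓh nh (-1) s₀|) hRpos hcs' hR2 hcond' with
    ⟨hc1, hc2⟩ | ⟨hc1, hc2⟩
  · left
    have h5 : (Real.cos θ₀) * ((Real.sqrt (nh s₀ ^ 2 - α s₀ ^ 2))⁻¹) * (Real.sqrt |sG α ℓh nh (-1) s₀|) = ℓh s₀ * nh s₀ := by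
      linear_combination ((Real.sqrt (nh s₀ ^ 2 - α s₀ ^ 2))⁻¹) * hc1 + (ℓh s₀ * nh s₀) * hw1
    rw [hF, hζ]
    show _ = sEvolute γ f₁ f₂ α ℓh nh (-1) s₀
    rw [sEvolute]
    funext i
    simp only [Pi.add_apply, Pi.sub_apply, Pi.smul_apply, smul_eq_mul]
    have hRR : (Real.sqrt |sG α ℓh nh (-1) s₀|)⁻¹ * (Real.sqrt |sG α ℓh nh (-1) s₀|) = 1 := inv_mul_cancel₀ hRne
    linear_combination ((Real.sqrt |sG α ℓh nh (-1) s₀|)⁻¹ * (nh s₀ * γ s₀ i - α s₀ * f₂ s₀ i)) * h5 + ((Real.sqrt |sG α ℓh nh (-1) s₀|)⁻¹ * f₁ s₀ i) * hc2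
      + (-(Real.cos θ₀ * (Real.sqrt (nh s₀ ^ 2 - α s₀ ^ 2))⁻¹ * (nh s₀ * γ s₀ i - α s₀ * f₂ s₀ i) + Real.sin θ₀ * f₁ s₀ i)) * hRR
  · right
    have h5 : (Real.cos θ₀) * ((Real.sqrt (nh s₀ ^ 2 - α s₀ ^ 2))⁻¹) * (Real.sqrt |sG α ℓh nh (-1) s₀|) = -(ℓh s₀ * nh s₀) := by
      linear_combination ((Real.sqrt (nh s₀ ^ 2 - α s₀ ^ 2))⁻¹) * hc1 - (ℓh s₀ * nh s₀) * hw1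
    rw [hF, hζ]
    show _ = -sEvolute γ f₁ f₂ α ℓh nh (-1) s₀
    rw [sEvolute]
    funext i
    simp only [Pi.add_apply, Pi.sub_apply, Pi.smul_apply, smul_eq_mul, Pi.neg_apply]
    have hRR : (Real.sqrt |sG α ℓh nh (-1) s₀|)⁻¹ * (Real.sqrt |sG α ℓh nh (-1) s₀|) = 1 := inv_mul_cancel₀ hRne
    linear_combination ((Real.sqrt |sG α ℓh nh (-1) s₀|)⁻¹ * (nh s₀ * γ s₀ i - α s₀ * f₂ s₀ i)) * h5 + ((Real.sqrt |sG α ℓh nh (-1) s₀|)⁻¹ * f₁ s₀ i) * hc2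
      + (-(Real.cos θ₀ * (Real.sqrt (nh s₀ ^ 2 - α s₀ ^ 2))⁻¹ * (nh s₀ * γ s₀ i - α s₀ * f₂ s₀ i) + Real.sin θ₀ * f₁ s₀ i)) * hRR
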